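/- Let r : ℂ × ℝ → ℝ and F : ℂ × ℝ → ℂ be functions differentiable in the second (time) variable, and for each t define X(·, t) : ℂ → ℝ³ by X = (x¹, x², x³) with x¹ + i x² = [2(F − F̄·ξ²) + 2ξ(1 + ξξ̄)·r]/(1 + ξξ̄)² and x³ = [−2(F·ξ̄ + F̄·ξ) + (1 − ξ²ξ̄²)·r]/(1 + ξξ̄)², and let n(ξ) = (2 Re ξ, 2 Im ξ, 1 − ξξ̄)/(1 + ξξ̄) ∈ ℝ³. Then ⟨∂X/∂t(ξ, t), n(ξ)⟩ = ∂r/∂t(ξ, t) for all (ξ, t). In particular, if the support function evolves by ∂r/∂t = −𝒦 for a given function 𝒦, then the normal component of ∂X/∂t equals −𝒦·n(ξ). -/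

import Mathlib

/-!
The point `X(ξ)` reconstructed from `(r, F)` always satisfies `⟨X(ξ), n(ξ)⟩ = r(ξ)`, which is
what makes `r` the support function. Since `n(ξ)` does not depend on `t`, differentiating this
identity in `t` gives `⟨∂X/∂t, n⟩ = ∂r/∂t`.
-/

open scoped RealInnerProductSpace

/-- The surface reconstructed in Gauss coordinates from the support function `r`
and the complex function `F`: its first two components satisfy
`x¹ + i x² = [2(F − F̄ξ²) + 2ξ(1+ξξ̄)r]/(1+ξξ̄)²` and its third component is
`x³ = [−2(Fξ̄ + F̄ξ) + (1−ξ²ξ̄²)r]/(1+ξξ̄)²`. -/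
noncomputable def Xsurf (r : ℂ → ℝ) (F : ℂ → ℂ) (ξ : ℂ) : EuclideanSpace ℝ (Fin 3) :=
  let A : ℂ := (2 * (F ξ - (starRingEnd ℂ) (F ξ) * ξ ^ 2) +
      2 * ξ * (1 + ξ * (starRingEnd ℂ) ξ) * (r ξ : ℂ)) / (1 + ξ * (starRingEnd ℂ) ξ) ^ 2
  let B : ℂ := (-2 * (F ξ * (starRingEnd ℂ) ξ + (starRingEnd ℂ) (F ξ) * ξ) +
      (1 - ξ ^ 2 * ((starRingEnd ℂ) ξ) ^ 2) * (r ξ : ℂ)) / (1 + ξ * (starRingEnd ℂ) ξ) ^ 2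
  WithLp.toLp 2 ![A.re, A.im, B.re]

/-- The unit normal direction `n(ξ) = (2 Re ξ, 2 Im ξ, 1 − ξξ̄)/(1 + ξξ̄)`. -/
noncomputable def nvec (ξ : ℂ) : EuclideanSpace ℝ (Fin 3) :=
  WithLp.toLp 2 ![2 * ξ.re / (1 + Complex.normSq ξ), 2 * ξ.im / (1 + Complex.normSq ξ),
    (1 - Complex.normSq ξ) / (1 + Complex.normSq ξ)]

theorem differentiableAt_Xsurf {r : ℂ → ℝ → ℝ} {F : ℂ → ℝ → ℂ} {ξ : ℂ} {t : ℝ}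
    (hr : DifferentiableAt ℝ (r ξ) t) (hF : DifferentiableAt ℝ (F ξ) t) :
    DifferentiableAt ℝ (fun τ => Xsurf (fun z => r z τ) (fun z => F z τ) ξ) t := by
  rw [differentiableAt_piLp]
  intro i
  fin_cases i <;>
    simp only [Xsurf, Fin.zero_eta, Fin.mk_one, Fin.reduceFinMk, Fin.isValue,
      Matrix.cons_val_zero, Matrix.cons_val_one, Matrix.cons_val] <;>
    fun_prop

theorem inner_Xsurf_nvec (r : ℂ → ℝ) (F : ℂ → ℂ) (ξ : ℂ) : ⟪Xsurf r F ξ, nvec ξ⟫ = r ξ := by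
  have hd : 1 + ξ * starRingEnd ℂ ξ = ((1 + Complex.normSq ξ : ℝ) : ℂ) := by
    rw [Complex.mul_conj]; push_cast; ring
  have hpos : 1 + Complex.normSq ξ ≠ 0 :=
    (add_pos_of_pos_of_nonneg one_pos (Complex.normSq_nonneg ξ)).ne'
  simp only [Xsurf, nvec, hd, PiLp.inner_apply, RCLike.inner_apply, conj_trivial,
    Fin.sum_univ_three, Matrix.cons_val_zero, Matrix.cons_val_one, Matrix.cons_val_two,
    Matrix.head_cons, Matrix.tail_cons, ← Complex.ofReal_pow, Complex.div_ofReal_re,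
    Complex.div_ofReal_im]
  obtain ⟨a, b⟩ := ξ
  obtain ⟨u, v⟩ := F ⟨a, b⟩
  simp only [Complex.normSq_mk, Complex.mul_re, Complex.mul_im, Complex.add_re,
    Complex.add_im, Complex.sub_re, Complex.sub_im, Complex.one_re, Complex.one_im,
    Complex.ofReal_re, Complex.ofReal_im, Complex.neg_re, Complex.neg_im,
    Complex.conj_re, Complex.conj_im, pow_two, Complex.re_ofNat, Complex.im_ofNat] at hpos ⊢
  field_simp
  ring

theorem support_function_flow (r : ℂ → ℝ → ℝ) (F : ℂ → ℝ → ℂ)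
    (hr : ∀ ξ : ℂ, Differentiable ℝ (r ξ)) (hF : ∀ ξ : ℂ, Differentiable ℝ (F ξ)) :
    (∀ (ξ : ℂ) (t : ℝ),
      ⟪deriv (fun τ => Xsurf (fun z => r z τ) (fun z => F z τ) ξ) t, nvec ξ⟫
        = deriv (r ξ) t) ∧
    (∀ 𝒦 : ℂ → ℝ → ℝ, (∀ (ξ : ℂ) (t : ℝ), deriv (r ξ) t = -𝒦 ξ t) →
      ∀ (ξ : ℂ) (t : ℝ),
        (⟪deriv (fun τ => Xsurf (fun z => r z τ) (fun z => F z τ) ξ) t, nvec ξ⟫ : ℝ) • nvec ξ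
          = (-𝒦 ξ t) • nvec ξ) := by
  have normal_speed : ∀ (ξ : ℂ) (t : ℝ),
      ⟪deriv (fun τ => Xsurf (fun z => r z τ) (fun z => F z τ) ξ) t, nvec ξ⟫
        = deriv (r ξ) t := fun ξ t => calc
    _ = deriv (fun τ => ⟪Xsurf (fun z => r z τ) (fun z => F z τ) ξ, nvec ξ⟫) t := by
      rw [deriv_inner_apply ℝ (differentiableAt_Xsurf (hr ξ t) (hF ξ t))
        (differentiableAt_const _), deriv_const, inner_zero_right, zero_add]
    _ = deriv (r ξ) t := by simp only [inner_Xsurf_nvec]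
  exact ⟨normal_speed, fun 𝒦 h𝒦 ξ t => by rw [normal_speed, h𝒦]⟩
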